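/- Every Volterra quadratic stochastic operator V on the simplex S^{m-1} is a homeomorphism of S^{m-1} onto itself. -/

import Mathlib

/-- The map of a quadratic stochastic operator given by coefficients `p`. -/
noncomputable def qsoMap {m : ℕ} (p : Fin m → Fin m → Fin m → ℝ) (x : Fin m → ℝ) :
    Fin m → ℝ :=
  fun k => ∑ i, ∑ j, p i j k * x i * x j

/-!
A Volterra operator can be written as `(Vx)_k = x_k (Cx)_k` with `C ≥ 0` and
`C_ki + C_ik = 2` (the normal form `x_k (1 + (Ax)_k)`, `A` skew-symmetric, homogenised on the
simplex: `C = J + A` with `J` the all-ones matrix).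
Everything rests on the identity `u ⬝ᵥ Cu = (∑ u)²`. It gives `∑ Vx = (∑ x)²`, so `V` maps the
simplex to itself. For `x, y` in the simplex it makes `∑ (x_k - y_k)((Cx)_k - (Cy)_k)` vanish,
while `Vx = Vy` makes every term nonpositive and zero only if `x_k = y_k`: `V` is injective.
It also shows that the Jacobian of `V` is invertible at every positive point, so by the inverse
function theorem the image of the simplex meets the open simplex in a relatively open, closed
and nonempty set; by connectedness `V` is onto, and a continuous bijection of a compact space
onto a Hausdorff one is a homeomorphism.
-/

open Finset Matrix

theorem sub_mul_sub_mul_add_eq_neg {a b A B : ℝ} (h : a * A = b * B) :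
    (a - b) * (A - B) * (a + b) = -((a - b) ^ 2 * (A + B)) := by
  linear_combination (2 * (a - b)) * h

theorem sub_mul_sub_nonpos_of_mul_eq_mul {a b A B : ℝ} (ha : 0 ≤ a) (hb : 0 ≤ b)
    (hA : a ≤ A) (hB : b ≤ B) (h : a * A = b * B) : (a - b) * (A - B) ≤ 0 := by
  rcases (add_nonneg ha hb).eq_or_lt with hab | hab
  · obtain rfl : a = 0 := by linarith
    obtain rfl : b = 0 := by linarith
    simp
  · refine nonpos_of_mul_nonpos_left ?_ hab
    rw [sub_mul_sub_mul_add_eq_neg h, neg_nonpos]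
    exact mul_nonneg (sq_nonneg _) (by linarith)

theorem eq_of_sub_mul_sub_eq_zero {a b A B : ℝ} (ha : 0 ≤ a) (hb : 0 ≤ b) (hA : a ≤ A)
    (hB : b ≤ B) (h : a * A = b * B) (h0 : (a - b) * (A - B) = 0) : a = b := by
  rcases (add_nonneg ha hb).eq_or_lt with hab | hab
  · linarith
  · have := sub_mul_sub_mul_add_eq_neg h
    rw [h0, zero_mul, zero_eq_neg, mul_eq_zero, or_iff_left (by linarith)] at this
    exact sub_eq_zero.1 (pow_eq_zero_iff two_ne_zero |>.1 this)

theorem IsPreconnected.subset_of_inter_eq_inter {X : Type*} [TopologicalSpace X] {s u k : Set X}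
    (hs : IsPreconnected s) (hu : IsOpen u) (hk : IsClosed k) (h : s ∩ u = s ∩ k)
    (hne : (s ∩ u).Nonempty) : s ⊆ k := by
  intro x hx
  by_contra hxk
  have hcover : s ⊆ u ∪ kᶜ := fun z hz => by
    by_cases hzk : z ∈ k
    · exact Or.inl (h.symm ▸ ⟨hz, hzk⟩ : z ∈ s ∩ u).2
    · exact Or.inr hzk
  obtain ⟨z, hzs, hzu, hzk⟩ := hs u kᶜ hu hk.isOpen_compl hcover hne ⟨x, hx, hxk⟩
  exact hzk (h ▸ ⟨hzs, hzu⟩ : z ∈ s ∩ k).2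

theorem Set.BijOn.exists_homeomorph {X Y : Type*} [TopologicalSpace X] [TopologicalSpace Y]
    [T2Space Y] {s : Set X} {t : Set Y} {f : X → Y} (h : Set.BijOn f s t) (hs : IsCompact s)
    (hf : ContinuousOn f s) : ∃ e : s ≃ₜ t, ∀ x, (e x : Y) = f x := by
  have := isCompact_iff_compactSpace.1 hs
  exact ⟨(hf.mapsToRestrict h.mapsTo).homeoOfEquivCompactToT2 (f := h.equiv f), fun _ => rfl⟩

section OpenStdSimplex

variable (ι : Type*) [Fintype ι]

def openStdSimplex : Set (ι → ℝ) := stdSimplex ℝ ι ∩ Set.univ.pi fun _ => Set.Ioi 0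

theorem convex_openStdSimplex : Convex ℝ (openStdSimplex ι) :=
  (convex_stdSimplex ℝ ι).inter (convex_pi fun _ _ => convex_Ioi 0)

theorem stdSimplex_subset_closure_openStdSimplex :
    stdSimplex ℝ ι ⊆ closure (openStdSimplex ι) := by
  intro y hy
  have : Nonempty ι := by
    by_contra h
    have := hy.2
    simp [not_nonempty_iff.1 h] at this
  set b : ι → ℝ := fun _ => (Fintype.card ι : ℝ)⁻¹
  have hb : b ∈ stdSimplex ℝ ι := ⟨fun _ => by positivity, by simp [b]⟩
  have hseg : openSegment ℝ b y ⊆ openStdSimplex ι := by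
    rintro _ ⟨s, t, hs, ht, hst, rfl⟩
    refine ⟨convex_stdSimplex ℝ ι hb hy hs.le ht.le hst, Set.mem_univ_pi.2 fun k => ?_⟩
    have := hy.1 k
    simp only [Pi.add_apply, Pi.smul_apply, smul_eq_mul, Set.mem_Ioi, b]
    positivity
  exact closure_mono hseg (segment_subset_closure_openSegment (right_mem_segment ℝ b y))

end OpenStdSimplex

section VolterraMap

variable {ι : Type*} [Fintype ι] {c : Matrix ι ι ℝ}

theorem dotProduct_mulVec_add_dotProduct_mulVec (hc : ∀ i j, c i j + c j i = 2)
    (u w : ι → ℝ) :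
    u ⬝ᵥ (c *ᵥ w) + w ⬝ᵥ (c *ᵥ u) = 2 * (∑ i, u i) * ∑ i, w i := by
  rw [mul_assoc, sum_mul_sum, mul_sum]
  simp only [dotProduct, mulVec, mul_sum]
  rw [sum_comm (f := fun i j => w i * (c i j * u j)), ← sum_add_distrib]
  refine sum_congr rfl fun i _ => ?_
  rw [← sum_add_distrib]
  refine sum_congr rfl fun j _ => ?_
  linear_combination u i * w j * hc i j

theorem dotProduct_mulVec_self (hc : ∀ i j, c i j + c j i = 2) (u : ι → ℝ) :
    u ⬝ᵥ (c *ᵥ u) = (∑ i, u i) ^ 2 := by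
  linear_combination dotProduct_mulVec_add_dotProduct_mulVec hc u u / 2

theorem le_mulVec_apply (hc : ∀ i j, c i j + c j i = 2) (hc0 : ∀ i j, 0 ≤ c i j)
    {x : ι → ℝ} (hx : 0 ≤ x) (k : ι) : x k ≤ (c *ᵥ x) k := by
  have hdiag : c k k = 1 := by linarith [hc k k]
  calc x k = c k k * x k := by rw [hdiag, one_mul]
    _ ≤ (c *ᵥ x) k := single_le_sum (f := fun i => c k i * x i)
        (fun i _ => mul_nonneg (hc0 k i) (hx i)) (mem_univ k)

def volterraMap (c : Matrix ι ι ℝ) (x : ι → ℝ) : ι → ℝ := x * (c *ᵥ x)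

theorem continuous_volterraMap (c : Matrix ι ι ℝ) : Continuous (volterraMap c) :=
  continuous_id.mul (continuous_const.matrix_mulVec continuous_id)

theorem sum_volterraMap (hc : ∀ i j, c i j + c j i = 2) (x : ι → ℝ) :
    ∑ k, volterraMap c x k = (∑ k, x k) ^ 2 :=
  dotProduct_mulVec_self hc x

theorem volterraMap_mapsTo (hc : ∀ i j, c i j + c j i = 2) (hc0 : ∀ i j, 0 ≤ c i j) :
    Set.MapsTo (volterraMap c) (stdSimplex ℝ ι) (stdSimplex ℝ ι) := fun x hx =>
  ⟨fun k => mul_nonneg (hx.1 k) ((hx.1 k).trans (le_mulVec_apply hc hc0 hx.1 k)),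
    by rw [sum_volterraMap hc, hx.2, one_pow]⟩

theorem volterraMap_mapsTo_openStdSimplex (hc : ∀ i j, c i j + c j i = 2)
    (hc0 : ∀ i j, 0 ≤ c i j) :
    Set.MapsTo (volterraMap c) (openStdSimplex ι) (openStdSimplex ι) := fun _ hx =>
  ⟨volterraMap_mapsTo hc hc0 hx.1, Set.mem_univ_pi.2 fun k =>
    mul_pos (hx.2 k trivial) ((hx.2 k trivial).trans_le (le_mulVec_apply hc hc0 hx.1.1 k))⟩

theorem volterraMap_injOn (hc : ∀ i j, c i j + c j i = 2) (hc0 : ∀ i j, 0 ≤ c i j) :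
    Set.InjOn (volterraMap c) (stdSimplex ℝ ι) := by
  intro x hx y hy hxy
  have hle : ∀ k, x k ≤ (c *ᵥ x) k := le_mulVec_apply hc hc0 hx.1
  have hle' : ∀ k, y k ≤ (c *ᵥ y) k := le_mulVec_apply hc hc0 hy.1
  have hW : ∀ k, x k * (c *ᵥ x) k = y k * (c *ᵥ y) k := congrFun hxy
  have hsum : ∑ k, (x k - y k) * ((c *ᵥ x) k - (c *ᵥ y) k) = 0 := by
    have := dotProduct_mulVec_self hc (x - y)
    simp only [mulVec_sub, sum_sub_distrib, Pi.sub_apply, hx.2, hy.2] at this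
    simpa [dotProduct] using this
  have hterm := (sum_eq_zero_iff_of_nonpos fun k _ =>
    sub_mul_sub_nonpos_of_mul_eq_mul (hx.1 k) (hy.1 k) (hle k) (hle' k) (hW k)).1 hsum
  funext k
  exact eq_of_sub_mul_sub_eq_zero (hx.1 k) (hy.1 k) (hle k) (hle' k) (hW k)
    (hterm k (mem_univ k))

noncomputable def volterraMapDeriv (c : Matrix ι ι ℝ) (x : ι → ℝ) : (ι → ℝ) →L[ℝ] ι → ℝ :=
  x • LinearMap.toContinuousLinearMap (mulVecLin c) + (c *ᵥ x) • ContinuousLinearMap.id ℝ _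

theorem volterraMapDeriv_apply (c : Matrix ι ι ℝ) (x v : ι → ℝ) :
    volterraMapDeriv c x v = x * (c *ᵥ v) + (c *ᵥ x) * v := rfl

theorem hasStrictFDerivAt_volterraMap (c : Matrix ι ι ℝ) (x : ι → ℝ) :
    HasStrictFDerivAt (volterraMap c) (volterraMapDeriv c x) x :=
  (hasStrictFDerivAt_id x).mul
    (LinearMap.toContinuousLinearMap (mulVecLin c)).hasStrictFDerivAt

theorem volterraMapDeriv_injective (hc : ∀ i j, c i j + c j i = 2) (hc0 : ∀ i j, 0 ≤ c i j)
    {x : ι → ℝ} (hx : ∀ k, 0 < x k) : Function.Injective (volterraMapDeriv c x) := by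
  rw [injective_iff_map_eq_zero]
  intro v hv
  -- pair `hv` with `v / x`: the result is a sum of nonnegative terms
  have hsum : ∑ k, v k ^ 2 * (c *ᵥ x) k / x k + (∑ k, v k) ^ 2 = 0 := by
    have h0 : ∑ k, v k / x k * volterraMapDeriv c x v k = 0 := by simp [hv]
    rw [← dotProduct_mulVec_self hc v, ← h0, dotProduct, ← sum_add_distrib]
    refine sum_congr rfl fun k _ => ?_
    simp only [volterraMapDeriv_apply, Pi.add_apply, Pi.mul_apply]
    field_simp [(hx k).ne']
    ring
  have hcx : ∀ k, 0 < (c *ᵥ x) k := fun k =>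
    (hx k).trans_le (le_mulVec_apply hc hc0 (fun i => (hx i).le) k)
  have hterm : ∀ k, 0 ≤ v k ^ 2 * (c *ᵥ x) k / x k := fun k =>
    div_nonneg (mul_nonneg (sq_nonneg _) (hcx k).le) (hx k).le
  have hzero := (sum_eq_zero_iff_of_nonneg fun k _ => hterm k).1
    ((add_eq_zero_iff_of_nonneg (sum_nonneg fun k _ => hterm k) (sq_nonneg _)).1 hsum).1
  funext k
  have := hzero k (mem_univ k)
  rw [div_eq_zero_iff, or_iff_left (hx k).ne', mul_eq_zero, or_iff_left (hcx k).ne'] at this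
  exact pow_eq_zero_iff two_ne_zero |>.1 this

theorem isOpen_image_volterraMap_pi_Ioi (hc : ∀ i j, c i j + c j i = 2)
    (hc0 : ∀ i j, 0 ≤ c i j) : IsOpen (volterraMap c '' Set.univ.pi fun _ => Set.Ioi 0) := by
  rw [isOpen_iff_mem_nhds]
  rintro _ ⟨x, hx, rfl⟩
  rw [Set.mem_univ_pi] at hx
  have hsurj : (volterraMapDeriv c x).range = ⊤ := LinearMap.range_eq_top.2 <|
    LinearMap.injective_iff_surjective.1 (volterraMapDeriv_injective hc hc0 hx)
  rw [← (hasStrictFDerivAt_volterraMap c x).map_nhds_eq_of_surj hsurj]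
  exact Filter.image_mem_map <|
    (isOpen_set_pi Set.finite_univ fun _ _ => isOpen_Ioi).mem_nhds (Set.mem_univ_pi.2 hx)

theorem openStdSimplex_subset_image_volterraMap (hc : ∀ i j, c i j + c j i = 2)
    (hc0 : ∀ i j, 0 ≤ c i j) : openStdSimplex ι ⊆ volterraMap c '' stdSimplex ℝ ι := by
  have hinter : openStdSimplex ι ∩ volterraMap c '' (Set.univ.pi fun _ => Set.Ioi 0) =
      openStdSimplex ι ∩ volterraMap c '' stdSimplex ℝ ι := by
    ext z
    refine and_congr_right fun hz => ⟨?_, ?_⟩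
    · rintro ⟨x, hx, rfl⟩
      have hx0 : 0 ≤ x := fun k => (hx k trivial).le
      have hsum : (∑ k, x k) ^ 2 = 1 := by rw [← sum_volterraMap hc, hz.1.2]
      exact ⟨x, ⟨hx0, (pow_eq_one_iff_of_nonneg (sum_nonneg fun k _ => hx0 k)
        two_ne_zero).1 hsum⟩, rfl⟩
    · rintro ⟨x, hx, rfl⟩
      exact ⟨x, fun k _ => pos_of_mul_pos_left (hz.2 k trivial)
        ((hx.1 k).trans (le_mulVec_apply hc hc0 hx.1 k)), rfl⟩
  intro y hy
  exact (convex_openStdSimplex ι).isPreconnected.subset_of_inter_eq_inter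
    (isOpen_image_volterraMap_pi_Ioi hc hc0)
    ((isCompact_stdSimplex ℝ ι).image (continuous_volterraMap c)).isClosed hinter
    ⟨volterraMap c y, volterraMap_mapsTo_openStdSimplex hc hc0 hy, y, hy.2, rfl⟩ hy

theorem volterraMap_bijOn (hc : ∀ i j, c i j + c j i = 2) (hc0 : ∀ i j, 0 ≤ c i j) :
    Set.BijOn (volterraMap c) (stdSimplex ℝ ι) (stdSimplex ℝ ι) :=
  ⟨volterraMap_mapsTo hc hc0, volterraMap_injOn hc hc0,
    (stdSimplex_subset_closure_openStdSimplex ι).trans <| closure_minimal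
      (openStdSimplex_subset_image_volterraMap hc hc0)
      ((isCompact_stdSimplex ℝ ι).image (continuous_volterraMap c)).isClosed⟩

end VolterraMap

structure IsVolterraQSO {ι : Type*} [Fintype ι] (p : ι → ι → ι → ℝ) : Prop where
  symm : ∀ i j k, p i j k = p j i k
  nonneg : ∀ i j k, 0 ≤ p i j k
  sum_eq_one : ∀ i j, ∑ k, p i j k = 1
  eq_zero : ∀ i j k, k ≠ i → k ≠ j → p i j k = 0

namespace IsVolterraQSO

variable {ι : Type*} [Fintype ι] [DecidableEq ι] {p : ι → ι → ι → ℝ}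

theorem sum_pair_eq_one (hp : IsVolterraQSO p) (i j : ι) : ∑ k ∈ {i, j}, p i j k = 1 := by
  rw [← hp.sum_eq_one i j]
  refine sum_subset (subset_univ _) fun k _ hk => ?_
  simp only [mem_insert, mem_singleton, not_or] at hk
  exact hp.eq_zero i j k hk.1 hk.2

theorem apply_self (hp : IsVolterraQSO p) (i : ι) : p i i i = 1 := by
  simpa using hp.sum_pair_eq_one i i

theorem add_apply_of_ne (hp : IsVolterraQSO p) {i j : ι} (hij : i ≠ j) :
    p i j i + p i j j = 1 := by
  simpa [sum_pair hij] using hp.sum_pair_eq_one i j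

end IsVolterraQSO

section VolterraMatrix

variable {ι : Type*} [DecidableEq ι] {p : ι → ι → ι → ℝ}

def volterraMatrix (p : ι → ι → ι → ℝ) : Matrix ι ι ℝ :=
  Matrix.of fun k i => if i = k then 1 else 2 * p k i k

theorem volterraMatrix_apply_self (p : ι → ι → ι → ℝ) (i : ι) :
    volterraMatrix p i i = 1 := by
  simp [volterraMatrix]

theorem volterraMatrix_apply_of_ne {i j : ι} (hij : j ≠ i) :
    volterraMatrix p i j = 2 * p i j i := by
  simp [volterraMatrix, hij]

variable [Fintype ι]

theorem volterraMatrix_add_apply (hp : IsVolterraQSO p) (i j : ι) :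
    volterraMatrix p i j + volterraMatrix p j i = 2 := by
  rcases eq_or_ne i j with rfl | hij
  · norm_num [volterraMatrix]
  · rw [volterraMatrix_apply_of_ne hij.symm, volterraMatrix_apply_of_ne hij, hp.symm j i j]
    linarith [hp.add_apply_of_ne hij]

theorem volterraMatrix_nonneg (hp : IsVolterraQSO p) (i j : ι) : 0 ≤ volterraMatrix p i j := by
  rw [volterraMatrix, of_apply]
  split_ifs
  · exact zero_le_one
  · exact mul_nonneg zero_le_two (hp.nonneg i j i)

end VolterraMatrix

theorem qsoMap_eq_volterraMap {m : ℕ} {p : Fin m → Fin m → Fin m → ℝ} (hp : IsVolterraQSO p) :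
    qsoMap p = volterraMap (volterraMatrix p) := by
  funext x k
  have hrow : ∀ i ≠ k, ∑ j, p i j k * x i * x j = x k * (p k i k * x i) := fun i hik => by
    rw [Fintype.sum_eq_single k fun j hjk => by rw [hp.eq_zero i j k hik.symm hjk.symm]; ring,
      hp.symm i k k]
    ring
  simp only [qsoMap, volterraMap, Pi.mul_apply, mulVec, dotProduct]
  rw [Fintype.sum_eq_add_sum_compl k, Fintype.sum_eq_add_sum_compl k,
    Fintype.sum_eq_add_sum_compl k (f := fun i => volterraMatrix p k i * x i),
    sum_congr rfl fun i hi => hrow i (by simpa using hi), hp.apply_self,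
    volterraMatrix_apply_self,
    sum_congr rfl fun i hi =>
      congrArg (· * x i) (volterraMatrix_apply_of_ne (by simpa using hi))]
  have hoff : ∑ i ∈ {k}ᶜ, p k i k * x k * x i + ∑ i ∈ {k}ᶜ, x k * (p k i k * x i) =
      x k * ∑ i ∈ {k}ᶜ, 2 * p k i k * x i := by
    rw [← sum_add_distrib, mul_sum]
    exact sum_congr rfl fun i _ => by ring
  linear_combination hoff

theorem volterra_qso_homeomorph_general (m : ℕ)
    (p : Fin m → Fin m → Fin m → ℝ)
    (hsymm : ∀ i j k, p i j k = p j i k)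
    (hnonneg : ∀ i j k, 0 ≤ p i j k)
    (hsum : ∀ i j, ∑ k, p i j k = 1)
    (hvol : ∀ i j k, k ≠ i → k ≠ j → p i j k = 0) :
    ∃ h : {x : Fin m → ℝ // x ∈ stdSimplex ℝ (Fin m)} ≃ₜ
          {x : Fin m → ℝ // x ∈ stdSimplex ℝ (Fin m)},
      ∀ x : {x : Fin m → ℝ // x ∈ stdSimplex ℝ (Fin m)},
        (h x : Fin m → ℝ) = qsoMap p (x : Fin m → ℝ) := by
  have hp : IsVolterraQSO p := ⟨hsymm, hnonneg, hsum, hvol⟩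
  rw [qsoMap_eq_volterraMap hp]
  exact (volterraMap_bijOn (volterraMatrix_add_apply hp)
    (volterraMatrix_nonneg hp)).exists_homeomorph (isCompact_stdSimplex ℝ _)
    (continuous_volterraMap _).continuousOn

/-- Every Volterra quadratic stochastic operator on the simplex `S^{m-1}`
is a homeomorphism of the simplex onto itself. -/
theorem volterra_qso_homeomorph (m : ℕ) (hm : 1 ≤ m)
    (p : Fin m → Fin m → Fin m → ℝ)
    (hsymm : ∀ i j k, p i j k = p j i k)
    (hnonneg : ∀ i j k, 0 ≤ p i j k)
    (hsum : ∀ i j, ∑ k, p i j k = 1)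
    (hvol : ∀ i j k, k ≠ i → k ≠ j → p i j k = 0) :
    ∃ h : {x : Fin m → ℝ // x ∈ stdSimplex ℝ (Fin m)} ≃ₜ
          {x : Fin m → ℝ // x ∈ stdSimplex ℝ (Fin m)},
      ∀ x : {x : Fin m → ℝ // x ∈ stdSimplex ℝ (Fin m)},
        (h x : Fin m → ℝ) = qsoMap p (x : Fin m → ℝ) :=
  volterra_qso_homeomorph_general m p hsymm hnonneg hsum hvol
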